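/- Let I ⊂ ℕ₀^d be finite with |M(I)| > 1, and set M := nextprime(max(2(|M(I)|-1), 2N_I)), where N_I = max_{k∈I}‖k‖_∞ and nextprime(x) = min{p prime : p > x}. Then reduction mod M is injective on M(I), and moreover M ≤ 4·max(|M(I)|-1, N_I) - 1; consequently |Cos(Λ(z,M))| ≤ 2·max(|M(I)|-1, N_I) for every z ∈ ℤ^d. -/

import Mathlib

open Real

/-- The mirror set `M({k})` of a single multi-index. -/
def mirror {d : ℕ} (k : Fin d → ℕ) : Finset (Fin d → ℤ) :=
  Finset.image (fun l : Fin d → Bool => fun j => if l j then (k j : ℤ) else -(k j : ℤ))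
    Finset.univ

/-- The mirrored index set `M(I) = ⋃_{k ∈ I} M({k})`. -/
def mirrorSet {d : ℕ} (I : Finset (Fin d → ℕ)) : Finset (Fin d → ℤ) :=
  I.biUnion mirror

/-- The maximal occurring power `N_I = max_{k∈I} ‖k‖_∞`. -/
def maxPower {d : ℕ} (I : Finset (Fin d → ℕ)) : ℕ :=
  I.sup fun k => Finset.univ.sup k

/-- The cosine transformed rank-1 lattice
`Cos(Λ(z,M)) = {cos(2π(j/M)z) : j = 0,…,M-1}` (cosine applied componentwise). -/
noncomputable def cosLattice (d : ℕ) (z : Fin d → ℤ) (M : ℕ) : Finset (Fin d → ℝ) :=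
  @Finset.image _ _ (Classical.decEq _)
    (fun j : Fin M => fun i : Fin d => Real.cos (2 * Real.pi * ((j : ℕ) : ℝ) / (M : ℝ) * (z i : ℝ)))
    Finset.univ

/-!
Every entry of a point of `M(I)` has absolute value at most `N_I`, so two points of `M(I)`
differ entrywise by less than `M > 2 N_I` and cannot agree mod `M`. Bertrand's postulate
gives a prime in `(2n, 4n]` with `n = max(|M(I)| - 1, N_I)`, and the least prime above `2n`
is odd, hence at most `4n - 1`. Finally `cos(2π j z / M) = cos(2π (M - j) z / M)`, so
`Cos(Λ(z, M))` is already attained by `j ≤ M / 2`.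
-/

theorem abs_le_maxPower_of_mem_mirrorSet {d : ℕ} {I : Finset (Fin d → ℕ)} {h : Fin d → ℤ}
    (hh : h ∈ mirrorSet I) (i : Fin d) : |h i| ≤ maxPower I := by
  simp only [mirrorSet, Finset.mem_biUnion, mirror, Finset.mem_image] at hh
  obtain ⟨k, hk, l, -, rfl⟩ := hh
  have hki : k i ≤ maxPower I := (Finset.le_sup (Finset.mem_univ i)).trans (Finset.le_sup hk)
  by_cases hl : l i <;> simpa [hl] using hki

theorem Set.injOn_emod_of_abs_le {ι : Type*} {S : Set (ι → ℤ)} {N M : ℤ} (hM : 2 * N < M)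
    (hS : ∀ h ∈ S, ∀ i, |h i| ≤ N) : S.InjOn fun h i => h i % M := by
  intro a ha b hb hab
  funext i
  have hdvd : M ∣ b i - a i := Int.ModEq.dvd (congrFun hab i)
  have hdist : |b i - a i| < M := by
    have := abs_le.mp (hS a ha i)
    have := abs_le.mp (hS b hb i)
    rw [abs_lt]
    omega
  linarith [Int.eq_zero_of_abs_lt_dvd hdvd hdist]

theorem Nat.Prime.le_four_mul_sub_one_of_minimal {n M : ℕ} (hn : 1 ≤ n) (hM : M.Prime)
    (hmin : ∀ p : ℕ, p.Prime → 2 * n < p → M ≤ p) : M ≤ 4 * n - 1 := by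
  obtain ⟨p, hp, hlt, hle⟩ := Nat.exists_prime_lt_and_le_two_mul (2 * n) (by omega)
  have hMp : M ≤ p := hmin p hp hlt
  rcases hM.eq_two_or_odd' with rfl | hodd
  · omega
  · obtain ⟨k, rfl⟩ := hodd
    omega

theorem cos_two_pi_mul_sub_div_mul (M j : ℝ) (hM : M ≠ 0) (z : ℤ) :
    cos (2 * π * (M - j) / M * z) = cos (2 * π * j / M * z) := by
  have : 2 * π * (M - j) / M * z = z * (2 * π) - 2 * π * j / M * z := by
    field_simp
  rw [this, cos_int_mul_two_pi_sub]

theorem card_cosLattice_le (d : ℕ) (z : Fin d → ℤ) (M : ℕ) :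
    (cosLattice d z M).card ≤ M / 2 + 1 := by
  classical
  let f : ℕ → Fin d → ℝ := fun j i => cos (2 * π * (j : ℝ) / M * (z i : ℝ))
  have hsub : cosLattice d z M ⊆ (Finset.range (M / 2 + 1)).image f := by
    intro x hx
    simp only [cosLattice, Finset.mem_image, Finset.mem_univ, true_and, Finset.mem_range] at hx ⊢
    obtain ⟨⟨j, hj⟩, rfl⟩ := hx
    by_cases hhalf : 2 * j ≤ M
    · exact ⟨j, by omega, rfl⟩
    · refine ⟨M - j, by omega, funext fun i => ?_⟩
      simp only [f, Nat.cast_sub hj.le]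
      exact cos_two_pi_mul_sub_div_mul _ _ (Nat.cast_ne_zero.mpr (by omega)) _
  calc (cosLattice d z M).card ≤ ((Finset.range (M / 2 + 1)).image f).card :=
        Finset.card_le_card hsub
    _ ≤ M / 2 + 1 := Finset.card_image_le.trans (Finset.card_range _).le

/-- Remark `remark_cards_cheb_lattices`, second part: for
`M = nextprime(max(2(|M(I)|-1), 2N_I))` (i.e. the smallest prime exceeding this bound),
reduction mod `M` is injective on `M(I)`, `M ≤ 4·max(|M(I)|-1, N_I) - 1`, and every
cosine transformed rank-1 lattice `Cos(Λ(z,M))` has at most `2·max(|M(I)|-1, N_I)`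
points. -/
theorem stmt_19 {d : ℕ} (I : Finset (Fin d → ℕ)) (hMI : 1 < (mirrorSet I).card)
    (M : ℕ) (hMprime : Nat.Prime M)
    (hMgt : max (2 * ((mirrorSet I).card - 1)) (2 * maxPower I) < M)
    (hMmin : ∀ p : ℕ, Nat.Prime p →
      max (2 * ((mirrorSet I).card - 1)) (2 * maxPower I) < p → M ≤ p) :
    Set.InjOn (fun h : Fin d → ℤ => fun i => h i % (M : ℤ)) (mirrorSet I)
    ∧ M ≤ 4 * max ((mirrorSet I).card - 1) (maxPower I) - 1
    ∧ ∀ z : Fin d → ℤ,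
        (cosLattice d z M).card ≤ 2 * max ((mirrorSet I).card - 1) (maxPower I) := by
  set n := max ((mirrorSet I).card - 1) (maxPower I)
  rw [Nat.mul_max_mul_left] at hMgt hMmin
  have hn : 1 ≤ n := le_max_of_le_left (by omega)
  have hMle : M ≤ 4 * n - 1 := hMprime.le_four_mul_sub_one_of_minimal hn hMmin
  have hNM : 2 * (maxPower I : ℤ) < M := by
    have : 2 * maxPower I < M := lt_of_le_of_lt (by omega) hMgt
    exact_mod_cast this
  refine ⟨Set.injOn_emod_of_abs_le hNM fun h hh => abs_le_maxPower_of_mem_mirrorSet hh,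
    hMle, fun z => ?_⟩
  have := card_cosLattice_le d z M
  omega
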